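/- Assume: (i) the only operator A ∈ B(K₀,H₀) with T₀A = AT̃₀ is A = 0, and (ii) the only operator B ∈ B(H₁,K₁) with T̃₁B = BT₁ is B = 0. Suppose there is a unitary U : H₀⊕H₁ → K₀⊕K₁ with blocks U_{ij} such that UT = T̃U. Define S₀ := Y∘U₁₀ − U₀₁∘X* ∈ B(H₀,K₀) and S₁ := U₀₁*∘Y − X*∘U₁₀* ∈ B(K₁,H₁). Then T̃₀S₀ = S₀T₀ and T₁S₁ = S₁T̃₁; moreover U₀₁* ∈ B(K₀,H₁) and U₁₀ ∈ B(H₀,K₁) are invertible, and the invertible operator Z := U₀₁* ⊕ U₁₀ : K₀⊕H₀ → H₁⊕K₁ satisfies Z∘F = F̃∘Z, where F := [[T̃₀, S₀],[0,T₀]] on K₀⊕H₀ and F̃ := [[T₁, S₁],[0,T̃₁]] on H₁⊕K₁; in particular F and F̃ are similar. -/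

import Mathlib

/-
Write `T = [[T₀, XT₁ - T₀X], [0, T₁]] = E (T₀ ⊕ T₁) E⁻¹` with `E = [[1, X], [0, 1]]`, and likewise
`T̃` with `Y`. Hence if `M T = G M` for a block operator `M` with lower row `(C, D)` and an upper
triangular `G`, then `CX + D` intertwines `T₁` with the lower-right entry of `G`; dually, if
`T M = M G` and `M` has first column `(A, C)`, then `A - XC` intertwines `T₀` with the upper-left
entry of `G`. Applied to the lower row of `U` and the first column of `U*`, the two
trivial-intertwiner hypotheses force `U₁₁ = -U₁₀X` and `U₀₀ = U₀₁X*`; applied to the first column of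
`U` and the lower row of `U*`, the same computation is the intertwining of `S₀` and `S₁`. For `U` of
this shape the entries of `U*U = 1` and `UU* = 1` exhibit the inverses `U₀₁(1 + X*X)` of `U₀₁*` and
`(1 + XX*)U₁₀*` of `U₁₀`, and the off-diagonal entry `U₀₁*U₀₁X* = X*U₁₀*U₁₀` of `U*U = 1` is the
off-diagonal entry `U₀₁*S₀ = S₁U₁₀` of `ZF = F̃Z`.
-/

open ContinuousLinearMap

noncomputable def blockOp {H₀ H₁ K₀ K₁ : Type*}
    [NormedAddCommGroup H₀] [InnerProductSpace ℂ H₀]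
    [NormedAddCommGroup H₁] [InnerProductSpace ℂ H₁]
    [NormedAddCommGroup K₀] [InnerProductSpace ℂ K₀]
    [NormedAddCommGroup K₁] [InnerProductSpace ℂ K₁]
    (A : H₀ →L[ℂ] K₀) (B : H₁ →L[ℂ] K₀) (C : H₀ →L[ℂ] K₁) (D : H₁ →L[ℂ] K₁) :
    WithLp 2 (H₀ × H₁) →L[ℂ] WithLp 2 (K₀ × K₁) :=
  (((WithLp.prodContinuousLinearEquiv 2 ℂ K₀ K₁).symm : (K₀ × K₁) →L[ℂ] WithLp 2 (K₀ × K₁)) ∘L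
    ((A.coprod B).prod (C.coprod D))) ∘L
    ((WithLp.prodContinuousLinearEquiv 2 ℂ H₀ H₁ : WithLp 2 (H₀ × H₁) →L[ℂ] (H₀ × H₁)))

section BlockOp

variable {H₀ H₁ K₀ K₁ L₀ L₁ : Type*}
    [NormedAddCommGroup H₀] [InnerProductSpace ℂ H₀]
    [NormedAddCommGroup H₁] [InnerProductSpace ℂ H₁]
    [NormedAddCommGroup K₀] [InnerProductSpace ℂ K₀]
    [NormedAddCommGroup K₁] [InnerProductSpace ℂ K₁]
    [NormedAddCommGroup L₀] [InnerProductSpace ℂ L₀]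
    [NormedAddCommGroup L₁] [InnerProductSpace ℂ L₁]

@[simp]
lemma blockOp_apply (A : H₀ →L[ℂ] K₀) (B : H₁ →L[ℂ] K₀) (C : H₀ →L[ℂ] K₁)
    (D : H₁ →L[ℂ] K₁) (x : WithLp 2 (H₀ × H₁)) :
    blockOp A B C D x = WithLp.toLp 2 (A x.fst + B x.snd, C x.fst + D x.snd) := rfl

lemma blockOp_comp (A : K₀ →L[ℂ] L₀) (B : K₁ →L[ℂ] L₀) (C : K₀ →L[ℂ] L₁)
    (D : K₁ →L[ℂ] L₁) (A' : H₀ →L[ℂ] K₀) (B' : H₁ →L[ℂ] K₀) (C' : H₀ →L[ℂ] K₁)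
    (D' : H₁ →L[ℂ] K₁) :
    blockOp A B C D ∘L blockOp A' B' C' D' =
      blockOp (A ∘L A' + B ∘L C') (A ∘L B' + B ∘L D')
        (C ∘L A' + D ∘L C') (C ∘L B' + D ∘L D') := by
  ext x
  simp only [comp_apply, blockOp_apply, WithLp.toLp_fst, WithLp.toLp_snd, map_add, add_apply]
  congr 2 <;> abel

lemma blockOp_one : blockOp (1 : H₀ →L[ℂ] H₀) 0 0 (1 : H₁ →L[ℂ] H₁) = 1 := by
  ext x
  simp only [blockOp_apply, zero_apply, add_zero, zero_add]
  rfl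

lemma blockOp_inj {A A' : H₀ →L[ℂ] K₀} {B B' : H₁ →L[ℂ] K₀} {C C' : H₀ →L[ℂ] K₁}
    {D D' : H₁ →L[ℂ] K₁} :
    blockOp A B C D = blockOp A' B' C' D' ↔ A = A' ∧ B = B' ∧ C = C' ∧ D = D' := by
  refine ⟨fun h ↦ ?_, fun ⟨rfl, rfl, rfl, rfl⟩ ↦ rfl⟩
  have h₀ (v : H₀) := congr($h (WithLp.toLp 2 (v, 0)))
  have h₁ (v : H₁) := congr($h (WithLp.toLp 2 (0, v)))
  refine ⟨?_, ?_, ?_, ?_⟩ <;> ext v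
  · simpa using congr(($(h₀ v)).fst)
  · simpa using congr(($(h₁ v)).fst)
  · simpa using congr(($(h₀ v)).snd)
  · simpa using congr(($(h₁ v)).snd)

lemma blockOp_adjoint [CompleteSpace H₀] [CompleteSpace H₁] [CompleteSpace K₀] [CompleteSpace K₁]
    (A : H₀ →L[ℂ] K₀) (B : H₁ →L[ℂ] K₀) (C : H₀ →L[ℂ] K₁) (D : H₁ →L[ℂ] K₁) :
    adjoint (blockOp A B C D) = blockOp (adjoint A) (adjoint C) (adjoint B) (adjoint D) := by
  refine ((eq_adjoint_iff _ _).2 fun x y ↦ ?_).symm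
  simp only [blockOp_apply, WithLp.prod_inner_apply, WithLp.ofLp_fst, WithLp.ofLp_snd,
    inner_add_left, inner_add_right, adjoint_inner_left]
  ring

lemma blockOp_diag_comp_diag (A : K₀ →L[ℂ] L₀) (D : K₁ →L[ℂ] L₁) (A' : H₀ →L[ℂ] K₀)
    (D' : H₁ →L[ℂ] K₁) :
    blockOp A 0 0 D ∘L blockOp A' 0 0 D' = blockOp (A ∘L A') 0 0 (D ∘L D') := by
  simp [blockOp_comp]

lemma blockOp_diag_comp_eq_comp_blockOp_diag_iff (A : K₀ →L[ℂ] H₁) (D : H₀ →L[ℂ] K₁)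
    (P : K₀ →L[ℂ] K₀) (Q : H₀ →L[ℂ] K₀) (R : H₀ →L[ℂ] H₀)
    (P' : H₁ →L[ℂ] H₁) (Q' : K₁ →L[ℂ] H₁) (R' : K₁ →L[ℂ] K₁) :
    blockOp A 0 0 D ∘L blockOp P Q 0 R = blockOp P' Q' 0 R' ∘L blockOp A 0 0 D ↔
      A ∘L P = P' ∘L A ∧ A ∘L Q = Q' ∘L D ∧ D ∘L R = R' ∘L D := by
  simp [blockOp_comp, blockOp_inj]

section Triangular

variable {T₀ : H₀ →L[ℂ] H₀} {T₁ : H₁ →L[ℂ] H₁} {X : H₁ →L[ℂ] H₀}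
  {P : K₀ →L[ℂ] K₀} {Q : K₁ →L[ℂ] K₀} {R : K₁ →L[ℂ] K₁}

lemma blockOp_comp_triangular_lowerRow {A : H₀ →L[ℂ] K₀} {B : H₁ →L[ℂ] K₀}
    {C : H₀ →L[ℂ] K₁} {D : H₁ →L[ℂ] K₁}
    (h : blockOp A B C D ∘L blockOp T₀ (X ∘L T₁ - T₀ ∘L X) 0 T₁ =
      blockOp P Q 0 R ∘L blockOp A B C D) :
    C ∘L T₀ = R ∘L C ∧ R ∘L (C ∘L X + D) = (C ∘L X + D) ∘L T₁ := by
  rw [blockOp_comp, blockOp_comp, blockOp_inj] at h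
  obtain ⟨-, -, hC, hD⟩ := h
  simp only [comp_zero, zero_comp, add_zero, zero_add] at hC hD
  refine ⟨hC, ?_⟩
  rw [comp_add, ← hD, ← comp_assoc, ← hC]
  simp only [comp_sub, add_comp, comp_assoc]
  abel

lemma triangular_comp_blockOp_firstColumn {A : K₀ →L[ℂ] H₀} {B : K₁ →L[ℂ] H₀}
    {C : K₀ →L[ℂ] H₁} {D : K₁ →L[ℂ] H₁}
    (h : blockOp T₀ (X ∘L T₁ - T₀ ∘L X) 0 T₁ ∘L blockOp A B C D =
      blockOp A B C D ∘L blockOp P Q 0 R) :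
    T₁ ∘L C = C ∘L P ∧ T₀ ∘L (A - X ∘L C) = (A - X ∘L C) ∘L P := by
  rw [blockOp_comp, blockOp_comp, blockOp_inj] at h
  obtain ⟨hA, -, hC, -⟩ := h
  simp only [comp_zero, zero_comp, add_zero, zero_add] at hA hC
  refine ⟨hC, ?_⟩
  rw [sub_comp, ← hA, comp_assoc, ← hC]
  simp only [comp_sub, sub_comp, comp_assoc]
  abel

end Triangular

end BlockOp

lemma comp_adjoint_eq_adjoint_comp_of_unitary {E F : Type*}
    [NormedAddCommGroup E] [InnerProductSpace ℂ E] [CompleteSpace E]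
    [NormedAddCommGroup F] [InnerProductSpace ℂ F] [CompleteSpace F]
    {U : E →L[ℂ] F} {T : E →L[ℂ] E} {T' : F →L[ℂ] F}
    (hU₁ : adjoint U ∘L U = 1) (hU₂ : U ∘L adjoint U = 1) (h : U ∘L T = T' ∘L U) :
    T ∘L adjoint U = adjoint U ∘L T' :=
  calc T ∘L adjoint U = (adjoint U ∘L U) ∘L T ∘L adjoint U := by rw [hU₁, one_def, id_comp]
    _ = adjoint U ∘L (T' ∘L U) ∘L adjoint U := by rw [← h]; simp only [comp_assoc]
    _ = adjoint U ∘L T' := by rw [comp_assoc, hU₂, one_def, comp_id]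

section Unitary

variable {H₀ H₁ K₀ K₁ : Type*}
    [NormedAddCommGroup H₀] [InnerProductSpace ℂ H₀] [CompleteSpace H₀]
    [NormedAddCommGroup H₁] [InnerProductSpace ℂ H₁] [CompleteSpace H₁]
    [NormedAddCommGroup K₀] [InnerProductSpace ℂ K₀] [CompleteSpace K₀]
    [NormedAddCommGroup K₁] [InnerProductSpace ℂ K₁] [CompleteSpace K₁]
    {X : H₁ →L[ℂ] H₀} {U₀₀ : H₀ →L[ℂ] K₀} {U₀₁ : H₁ →L[ℂ] K₀} {U₁₀ : H₀ →L[ℂ] K₁}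
    {U₁₁ : H₁ →L[ℂ] K₁}

lemma entries_of_adjoint_comp_self_eq_one (hU₀₀ : U₀₀ = U₀₁ ∘L adjoint X)
    (hU₁₁ : U₁₁ = -(U₁₀ ∘L X))
    (hU : adjoint (blockOp U₀₀ U₀₁ U₁₀ U₁₁) ∘L blockOp U₀₀ U₀₁ U₁₀ U₁₁ = 1) :
    X ∘L adjoint U₀₁ ∘L U₀₁ ∘L adjoint X + adjoint U₁₀ ∘L U₁₀ = 1 ∧
      adjoint U₀₁ ∘L U₀₁ ∘L adjoint X = adjoint X ∘L adjoint U₁₀ ∘L U₁₀ ∧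
      adjoint U₀₁ ∘L U₀₁ + adjoint X ∘L adjoint U₁₀ ∘L U₁₀ ∘L X = 1 := by
  rw [blockOp_adjoint, blockOp_comp, ← blockOp_one, blockOp_inj] at hU
  obtain ⟨h₀₀, -, h₁₀, h₁₁⟩ := hU
  subst hU₀₀ hU₁₁
  simp only [adjoint_comp, adjoint_adjoint, map_neg, neg_comp, comp_neg, neg_neg,
    comp_assoc] at h₀₀ h₁₀ h₁₁
  exact ⟨h₀₀, sub_eq_zero.1 (by rw [sub_eq_add_neg]; exact h₁₀), h₁₁⟩

lemma entries_of_self_comp_adjoint_eq_one (hU₀₀ : U₀₀ = U₀₁ ∘L adjoint X)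
    (hU₁₁ : U₁₁ = -(U₁₀ ∘L X))
    (hU : blockOp U₀₀ U₀₁ U₁₀ U₁₁ ∘L adjoint (blockOp U₀₀ U₀₁ U₁₀ U₁₁) = 1) :
    U₀₁ ∘L adjoint X ∘L X ∘L adjoint U₀₁ + U₀₁ ∘L adjoint U₀₁ = 1 ∧
      U₁₀ ∘L adjoint U₁₀ + U₁₀ ∘L X ∘L adjoint X ∘L adjoint U₁₀ = 1 := by
  rw [blockOp_adjoint, blockOp_comp, ← blockOp_one, blockOp_inj] at hU
  obtain ⟨h₀₀, -, -, h₁₁⟩ := hU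
  subst hU₀₀ hU₁₁
  simp only [adjoint_comp, adjoint_adjoint, map_neg, neg_comp, comp_neg, neg_neg,
    comp_assoc] at h₀₀ h₁₁
  exact ⟨h₀₀, h₁₁⟩

lemma exists_inverse_adjoint_of_unitary (hU₀₀ : U₀₀ = U₀₁ ∘L adjoint X)
    (hU₁₁ : U₁₁ = -(U₁₀ ∘L X))
    (hU₁ : adjoint (blockOp U₀₀ U₀₁ U₁₀ U₁₁) ∘L blockOp U₀₀ U₀₁ U₁₀ U₁₁ = 1)
    (hU₂ : blockOp U₀₀ U₀₁ U₁₀ U₁₁ ∘L adjoint (blockOp U₀₀ U₀₁ U₁₀ U₁₁) = 1) :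
    ∃ W : H₁ →L[ℂ] K₀, adjoint U₀₁ ∘L W = 1 ∧ W ∘L adjoint U₀₁ = 1 := by
  obtain ⟨-, hmix, h₁₁⟩ := entries_of_adjoint_comp_self_eq_one hU₀₀ hU₁₁ hU₁
  obtain ⟨h₀₀, -⟩ := entries_of_self_comp_adjoint_eq_one hU₀₀ hU₁₁ hU₂
  have hmixX :
      adjoint U₀₁ ∘L U₀₁ ∘L adjoint X ∘L X = adjoint X ∘L adjoint U₁₀ ∘L U₁₀ ∘L X := by
    simpa only [comp_assoc] using congr($hmix ∘L X)
  refine ⟨U₀₁ ∘L (1 + adjoint X ∘L X), ?_, ?_⟩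
  · simp only [comp_add, one_def, comp_id, hmixX]
    exact h₁₁
  · simp only [add_comp, comp_add, one_def, id_comp, comp_assoc]
    rw [add_comm]
    exact h₀₀

lemma exists_inverse_of_unitary (hU₀₀ : U₀₀ = U₀₁ ∘L adjoint X)
    (hU₁₁ : U₁₁ = -(U₁₀ ∘L X))
    (hU₁ : adjoint (blockOp U₀₀ U₀₁ U₁₀ U₁₁) ∘L blockOp U₀₀ U₀₁ U₁₀ U₁₁ = 1)
    (hU₂ : blockOp U₀₀ U₀₁ U₁₀ U₁₁ ∘L adjoint (blockOp U₀₀ U₀₁ U₁₀ U₁₁) = 1) :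
    ∃ V : K₁ →L[ℂ] H₀, U₁₀ ∘L V = 1 ∧ V ∘L U₁₀ = 1 := by
  obtain ⟨h₀₀, hmix, -⟩ := entries_of_adjoint_comp_self_eq_one hU₀₀ hU₁₁ hU₁
  obtain ⟨-, h₁₁⟩ := entries_of_self_comp_adjoint_eq_one hU₀₀ hU₁₁ hU₂
  refine ⟨(1 + X ∘L adjoint X) ∘L adjoint U₁₀, ?_, ?_⟩
  · simp only [comp_add, add_comp, one_def, id_comp, comp_assoc]
    exact h₁₁
  · simp only [add_comp, one_def, id_comp, comp_assoc, ← hmix]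
    rw [add_comm]
    exact h₀₀

end Unitary

/-- if `UT = T̃U` for a unitary `U` with blocks `U_{ij}`, and the intertwining
kernels `ker σ_{T₀,T̃₀}` and `ker σ_{T̃₁,T₁}` are trivial, then with
`S₀ = YU₁₀ - U₀₁X*` and `S₁ = U₀₁*Y - X*U₁₀*`, the operators `F = [[T̃₀,S₀],[0,T₀]]` and
`F̃ = [[T₁,S₁],[0,T̃₁]]` satisfy `ZF = F̃Z` for the invertible `Z = U₀₁* ⊕ U₁₀`. -/
theorem stmt5 {H₀ H₁ K₀ K₁ : Type*}
    [NormedAddCommGroup H₀] [InnerProductSpace ℂ H₀] [CompleteSpace H₀]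
    [NormedAddCommGroup H₁] [InnerProductSpace ℂ H₁] [CompleteSpace H₁]
    [NormedAddCommGroup K₀] [InnerProductSpace ℂ K₀] [CompleteSpace K₀]
    [NormedAddCommGroup K₁] [InnerProductSpace ℂ K₁] [CompleteSpace K₁]
    (T₀ : H₀ →L[ℂ] H₀) (T₁ : H₁ →L[ℂ] H₁) (X : H₁ →L[ℂ] H₀)
    (T' : K₀ →L[ℂ] K₀) (T'' : K₁ →L[ℂ] K₁) (Y : K₁ →L[ℂ] K₀)
    (h1 : ∀ A : K₀ →L[ℂ] H₀, T₀ ∘L A = A ∘L T' → A = 0)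
    (h2 : ∀ B : H₁ →L[ℂ] K₁, T'' ∘L B = B ∘L T₁ → B = 0)
    (U₀₀ : H₀ →L[ℂ] K₀) (U₀₁ : H₁ →L[ℂ] K₀) (U₁₀ : H₀ →L[ℂ] K₁) (U₁₁ : H₁ →L[ℂ] K₁)
    (U : WithLp 2 (H₀ × H₁) →L[ℂ] WithLp 2 (K₀ × K₁))
    (hU : U = blockOp U₀₀ U₀₁ U₁₀ U₁₁)
    (hU1 : adjoint U ∘L U = ContinuousLinearMap.id ℂ _)
    (hU2 : U ∘L adjoint U = ContinuousLinearMap.id ℂ _)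
    (hUT : U ∘L blockOp T₀ (X ∘L T₁ - T₀ ∘L X) 0 T₁
        = blockOp T' (Y ∘L T'' - T' ∘L Y) 0 T'' ∘L U)
    (S₀ : H₀ →L[ℂ] K₀) (hS₀ : S₀ = Y ∘L U₁₀ - U₀₁ ∘L adjoint X)
    (S₁ : K₁ →L[ℂ] H₁) (hS₁ : S₁ = adjoint U₀₁ ∘L Y - adjoint X ∘L adjoint U₁₀) :
    T' ∘L S₀ = S₀ ∘L T₀ ∧
    T₁ ∘L S₁ = S₁ ∘L T'' ∧
    (∃ W : H₁ →L[ℂ] K₀, adjoint U₀₁ ∘L W = 1 ∧ W ∘L adjoint U₀₁ = 1) ∧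
    (∃ V : K₁ →L[ℂ] H₀, U₁₀ ∘L V = 1 ∧ V ∘L U₁₀ = 1) ∧
    (∃ Zinv : WithLp 2 (H₁ × K₁) →L[ℂ] WithLp 2 (K₀ × H₀),
      blockOp (adjoint U₀₁) 0 0 U₁₀ ∘L Zinv = 1 ∧
      Zinv ∘L blockOp (adjoint U₀₁) 0 0 U₁₀ = 1) ∧
    blockOp (adjoint U₀₁) 0 0 U₁₀ ∘L blockOp T' S₀ 0 T₀
      = blockOp T₁ S₁ 0 T'' ∘L blockOp (adjoint U₀₁) 0 0 U₁₀ := by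
  subst hU hS₀ hS₁
  have hTU := comp_adjoint_eq_adjoint_comp_of_unitary hU1 hU2 hUT
  rw [blockOp_adjoint] at hTU
  obtain ⟨hU₁₀T, hrow⟩ := blockOp_comp_triangular_lowerRow hUT
  obtain ⟨hTU₀₁, hcol⟩ := triangular_comp_blockOp_firstColumn hTU
  have hU₁₁ : U₁₁ = -(U₁₀ ∘L X) := eq_neg_of_add_eq_zero_right (h2 _ hrow)
  have hU₀₀ : U₀₀ = U₀₁ ∘L adjoint X := by
    have h := sub_eq_zero.1 (h1 _ hcol)
    simpa [adjoint_comp] using congr(adjoint $h)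
  have hmix := (entries_of_adjoint_comp_self_eq_one hU₀₀ hU₁₁ hU1).2.1
  obtain ⟨W, hW₁, hW₂⟩ := exists_inverse_adjoint_of_unitary hU₀₀ hU₁₁ hU1 hU2
  obtain ⟨V, hV₁, hV₂⟩ := exists_inverse_of_unitary hU₀₀ hU₁₁ hU1 hU2
  refine ⟨?_, ?_, ⟨W, hW₁, hW₂⟩, ⟨V, hV₁, hV₂⟩, ⟨blockOp W 0 0 V, ?_, ?_⟩, ?_⟩
  · have h := (triangular_comp_blockOp_firstColumn hUT.symm).2
    rw [← hU₀₀, ← neg_sub, comp_neg, neg_comp, h]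
  · have h := (blockOp_comp_triangular_lowerRow hTU.symm).2
    rwa [hU₁₁, map_neg, adjoint_comp, ← sub_eq_add_neg] at h
  · rw [blockOp_diag_comp_diag, hW₁, hV₁, blockOp_one]
  · rw [blockOp_diag_comp_diag, hW₂, hV₂, blockOp_one]
  · rw [blockOp_diag_comp_eq_comp_blockOp_diag_iff]
    refine ⟨hTU₀₁.symm, ?_, hU₁₀T⟩
    simp only [comp_sub, sub_comp, comp_assoc, hmix]
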